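/- Let d, k, n ≥ 2, and let (i_1,…,i_n;j) and (i′_1,…,i′_n;j′) be two distinct elements of {2,…,k}^n × {0,1,…,n−1} satisfying i_1 + ⋯ + i_n − j = i′_1 + ⋯ + i′_n − j′. Then the closure of A_{i_1,…,i_n;j} in F(ℝ^d,k)^n is disjoint from A_{i′_1,…,i′_n;j′}. -/

import Mathlib

/-!
The number `c̄p` of distinct projected points is lower semicontinuous on `F(ℝ^d,k)`, and the
number of vectors `e_{C_s}` equal to `-e_{C_1}` is upper semicontinuous (each such equation is a
closed condition). Hence on the closure of `A_{i_1,…,i_n;j}` we have `c̄p(C_s) ≤ i_s` and at least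
`j` reversed vectors, so a point of `A_{i'_1,…,i'_n;j'}` there has `i'_s ≤ i_s` and `j ≤ j'`;
equality of `∑ i_s - j` and `∑ i'_s - j'` then forces all of these to be equalities.
-/

open unitInterval

noncomputable section

/-- Euclidean space ℝ^d. -/
abbrev E (d : ℕ) : Type := EuclideanSpace ℝ (Fin d)

/-- The ordered configuration space F(ℝ^d, k) of k distinct points in ℝ^d,
viewed as the subspace of (ℝ^d)^k of injective tuples. -/
def Conf (d k : ℕ) : Set (Fin k → E d) := {x | Function.Injective x}

/-- The time i/(n-1) ∈ [0,1] at which the i-th configuration is visited. -/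
def eTime (n : ℕ) (i : Fin n) : unitInterval :=
  Set.projIcc 0 1 zero_le_one ((i : ℝ) / ((n : ℝ) - 1))

/-- The evaluation map e_n : P(X) → X^n,
e_n(γ) = (γ(0), γ(1/(n-1)), …, γ((n-2)/(n-1)), γ(1)). -/
def evalMap {X : Type*} [TopologicalSpace X] (n : ℕ) (γ : C(unitInterval, X)) : Fin n → X :=
  fun i => γ (eTime n i)

/-- `A ⊆ X^n` admits a continuous section of the evaluation map e_n. -/
def HasSec {X : Type*} [TopologicalSpace X] (n : ℕ) (A : Set (Fin n → X)) : Prop :=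
  ∃ s : A → C(unitInterval, X), Continuous s ∧ ∀ a : A, evalMap n (s a) = (a : Fin n → X)

/-- The orienting unit vector e_C = (x_2 - x_1)/|x_2 - x_1| of the line L_C
through x_1 and x_2. -/
def eV {d k : ℕ} (hk : 2 ≤ k) (C : Fin k → E d) : E d :=
  ‖C ⟨1, by omega⟩ - C ⟨0, by omega⟩‖⁻¹ • (C ⟨1, by omega⟩ - C ⟨0, by omega⟩)

/-- The orthogonal projection p_C : ℝ^d → L_C onto the affine line L_C
through x_1 and x_2. -/
def pC {d k : ℕ} (hk : 2 ≤ k) (C : Fin k → E d) (x : E d) : E d :=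
  C ⟨0, by omega⟩ + (inner ℝ (x - C ⟨0, by omega⟩) (eV hk C) : ℝ) • eV hk C

/-- c̄p(C) = cardinality of {p_C(x_1),…,p_C(x_k)}. -/
def cpBar {d k : ℕ} (hk : 2 ≤ k) (C : Fin k → E d) : ℕ :=
  (Set.range fun i => pC hk C (C i)).ncard

/-- The set A_{i_1,…,i_n;j} of n-tuples (C_1,…,C_n) ∈ F(ℝ^d,k)^n with
c̄p(C_s) = i_s for all s and exactly j of the vectors e_{C_1},…,e_{C_n} equal
-e_{C_1}. -/
def Atup (d k n : ℕ) (hk : 2 ≤ k) (hn : 2 ≤ n) (iv : Fin n → ℕ) (j : ℕ) :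
    Set (Fin n → ↥(Conf d k)) :=
  {C | (∀ s : Fin n, cpBar hk ((C s : Fin k → E d)) = iv s) ∧
    {s : Fin n | eV hk ((C s : Fin k → E d)) =
      -eV hk ((C ⟨0, by omega⟩ : Fin k → E d))}.ncard = j}

section Semicontinuity

variable {X ι Y : Type*} [TopologicalSpace X] [TopologicalSpace Y]

lemma isOpen_setOf_injOn [T2Space Y] {f : X → ι → Y} (hf : ∀ i, Continuous fun x => f x i)
    {t : Set ι} (ht : t.Finite) : IsOpen {x | Set.InjOn (f x) t} := by
  have : {x | Set.InjOn (f x) t} = ⋂ a ∈ t, ⋂ b ∈ t, {x | f x a = f x b → a = b} := by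
    ext x; simp [Set.InjOn]
  rw [this]
  refine ht.isOpen_biInter fun a _ => ht.isOpen_biInter fun b _ => ?_
  by_cases hab : a = b
  · simp [hab]
  · simpa [hab] using isOpen_ne_fun (hf a) (hf b)

lemma isOpen_setOf_le_ncard_range [T2Space Y] [Finite ι] {f : X → ι → Y} (hf : Continuous f)
    (m : ℕ) : IsOpen {x | m ≤ (Set.range (f x)).ncard} := by
  rw [isOpen_iff_forall_mem_open]
  intro x hx
  obtain ⟨t, -, hbij⟩ := Set.exists_subset_bijOn Set.univ (f x)
  rw [Set.image_univ] at hbij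
  refine ⟨{y | Set.InjOn (f y) t}, fun y hy => ?_,
    isOpen_setOf_injOn (fun i => (continuous_apply i).comp hf) t.toFinite, hbij.injOn⟩
  calc m ≤ (Set.range (f x)).ncard := hx
    _ = t.ncard := by rw [← hbij.image_eq, hbij.injOn.ncard_image]
    _ = (f y '' t).ncard := hy.ncard_image.symm
    _ ≤ (Set.range (f y)).ncard := Set.ncard_le_ncard (Set.image_subset_range _ _)

lemma isClosed_setOf_le_ncard [Finite ι] {P : ι → X → Prop} (hP : ∀ i, IsClosed {x | P i x})
    (m : ℕ) : IsClosed {x | m ≤ {i | P i x}.ncard} := by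
  rw [← isOpen_compl_iff, isOpen_iff_forall_mem_open]
  intro x hx
  refine ⟨⋂ i ∈ {i | ¬P i x}, {y | ¬P i y}, fun y hy => ?_,
    (Set.toFinite _).isOpen_biInter fun i _ => (hP i).isOpen_compl, by simp⟩
  have hsub : {i | P i y} ⊆ {i | P i x} := fun i hi => by
    by_contra h
    exact Set.mem_iInter₂.1 hy i h hi
  simp only [Set.mem_compl_iff, Set.mem_ofPred_eq, not_le] at hx ⊢
  exact (Set.ncard_le_ncard hsub).trans_lt hx

end Semicontinuity

lemma eq_of_le_of_sum_sub_eq {ι : Type*} [Fintype ι] {a a' : ι → ℕ} {j j' : ℕ}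
    (ha : ∀ s, a' s ≤ a s) (hj : j ≤ j')
    (hsum : (∑ s, (a s : ℤ)) - (j : ℤ) = (∑ s, (a' s : ℤ)) - (j' : ℤ)) : a = a' ∧ j = j' := by
  have hle : ∑ s, (a' s : ℤ) ≤ ∑ s, (a s : ℤ) :=
    Finset.sum_le_sum fun s _ => by exact_mod_cast ha s
  have hjj : j = j' := by omega
  have hsum' : ∑ s, a' s = ∑ s, a s := by
    have : ∑ s, (a' s : ℤ) = ∑ s, (a s : ℤ) := by omega
    exact_mod_cast this
  refine ⟨funext fun s => ?_, hjj⟩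
  exact ((Finset.sum_eq_sum_iff_of_le fun s _ => ha s).1 hsum' s (Finset.mem_univ s)).symm

variable {d k : ℕ}

lemma continuous_conf_apply (i : Fin k) : Continuous fun C : Conf d k => (C : Fin k → E d) i :=
  (continuous_apply i).comp continuous_subtype_val

lemma continuous_eV (hk : 2 ≤ k) : Continuous fun C : Conf d k => eV hk (C : Fin k → E d) := by
  have hne : ∀ C : Conf d k,
      (C : Fin k → E d) ⟨1, by omega⟩ - (C : Fin k → E d) ⟨0, by omega⟩ ≠ 0 := fun C h =>
    absurd (C.2 (sub_eq_zero.1 h)) (by simp)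
  have hsub := (continuous_conf_apply (d := d) (⟨1, by omega⟩ : Fin k)).sub
    (continuous_conf_apply ⟨0, by omega⟩)
  exact (hsub.norm.inv₀ fun C => norm_ne_zero_iff.2 (hne C)).smul hsub

lemma isClosed_setOf_cpBar_le (hk : 2 ≤ k) (m : ℕ) :
    IsClosed {C : Conf d k | cpBar hk (C : Fin k → E d) ≤ m} := by
  have hproj : Continuous fun (C : Conf d k) i => pC hk (C : Fin k → E d) ((C : Fin k → E d) i) :=
    continuous_pi fun i => (continuous_conf_apply _).add
      ((((continuous_conf_apply i).sub (continuous_conf_apply _)).inner (𝕜 := ℝ)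
        (continuous_eV hk)).smul (continuous_eV hk))
  convert (isOpen_setOf_le_ncard_range hproj (m + 1)).isClosed_compl using 1
  ext C
  simp only [cpBar, Set.mem_compl_iff, Set.mem_ofPred_eq, not_le, Nat.lt_add_one_iff]

lemma closure_Atup_subset {n : ℕ} (hk : 2 ≤ k) (hn : 2 ≤ n) (iv : Fin n → ℕ) (j : ℕ) :
    closure (Atup d k n hk hn iv j) ⊆
      {C | (∀ s, cpBar hk (C s : Fin k → E d) ≤ iv s) ∧
        j ≤ {s : Fin n | eV hk (C s : Fin k → E d) =
          -eV hk (C ⟨0, by omega⟩ : Fin k → E d)}.ncard} := by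
  refine closure_minimal (fun C hC => ⟨fun s => (hC.1 s).le, hC.2.ge⟩) ?_
  rw [Set.ofPred_and, Set.ofPred_forall]
  refine (isClosed_iInter fun s => (isClosed_setOf_cpBar_le hk (iv s)).preimage
    (continuous_apply s)).inter (isClosed_setOf_le_ncard (ι := Fin n) (fun s => ?_) j)
  exact isClosed_eq ((continuous_eV hk).comp (continuous_apply s))
    ((continuous_eV hk).comp (continuous_apply (⟨0, by omega⟩ : Fin n))).neg

theorem stmt18_general (d k n : ℕ) (hk : 2 ≤ k) (hn : 2 ≤ n)
    (iv iv' : Fin n → ℕ) (j j' : ℕ)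
    (hne : (iv, j) ≠ (iv', j'))
    (hsum : (∑ s, (iv s : ℤ)) - (j : ℤ) = (∑ s, (iv' s : ℤ)) - (j' : ℤ)) :
    closure (Atup d k n hk hn iv j) ∩ Atup d k n hk hn iv' j' = ∅ := by
  refine Set.eq_empty_iff_forall_notMem.2 fun C ⟨hC, hcp', hcount'⟩ => hne ?_
  obtain ⟨hcp, hcount⟩ := closure_Atup_subset hk hn iv j hC
  obtain ⟨rfl, rfl⟩ :=
    eq_of_le_of_sum_sub_eq (fun s => hcp' s ▸ hcp s) (hcount' ▸ hcount) hsum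
  rfl

/-- For d, k, n ≥ 2 and distinct labels (i_1,…,i_n;j) ≠
(i'_1,…,i'_n;j') in {2,…,k}^n × {0,…,n-1} with i_1+⋯+i_n - j =
i'_1+⋯+i'_n - j', the closure of A_{i_1,…,i_n;j} in F(ℝ^d,k)^n is disjoint
from A_{i'_1,…,i'_n;j'}. -/
theorem stmt18 (d k n : ℕ) (hd : 2 ≤ d) (hk : 2 ≤ k) (hn : 2 ≤ n)
    (iv iv' : Fin n → ℕ) (j j' : ℕ)
    (hiv : ∀ s, 2 ≤ iv s ∧ iv s ≤ k) (hiv' : ∀ s, 2 ≤ iv' s ∧ iv' s ≤ k)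
    (hj : j ≤ n - 1) (hj' : j' ≤ n - 1)
    (hne : (iv, j) ≠ (iv', j'))
    (hsum : (∑ s, (iv s : ℤ)) - (j : ℤ) = (∑ s, (iv' s : ℤ)) - (j' : ℤ)) :
    closure (Atup d k n hk hn iv j) ∩ Atup d k n hk hn iv' j' = ∅ :=
  stmt18_general d k n hk hn iv iv' j j' hne hsum
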